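/- arXiv:2510.09946 — 4 statements merged into one kernel-verified Lean document; each statement's English description precedes it below -/
import Mathlib

section
/- (Point-picking lemma.) Let (M,d) be a metric space, U ⊆ M a subset with nonempty complement, and ρ : U → ℝ a strictly positive function. Suppose x̄ ∈ U satisfies infDist(x̄, Uᶜ) > 0 and attains the supremum m := infDist(x̄, Uᶜ)/ρ(x̄), i.e., infDist(x, Uᶜ)/ρ(x) ≤ m for all x ∈ U. Then every point x ∈ M with d(x, x̄) ≤ infDist(x̄, Uᶜ)/2 lies in U and satisfies ρ(x) ≥ ρ(x̄)/2. -/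
/-- Point-picking lemma: if x₀ ∈ U attains the supremum m of infDist(·,Uᶜ)/ρ(·) over U,
then every point within infDist(x₀,Uᶜ)/2 of x₀ lies in U and has ρ ≥ ρ(x₀)/2. -/
theorem stmt_3 (M : Type*) [MetricSpace M] (U : Set M) (hUc : Uᶜ.Nonempty)
    (ρ : M → ℝ) (hρ : ∀ x ∈ U, 0 < ρ x)
    (x₀ : M) (hx₀ : x₀ ∈ U) (hpos : 0 < Metric.infDist x₀ Uᶜ)
    (m : ℝ) (hm : m = Metric.infDist x₀ Uᶜ / ρ x₀)
    (hsup : ∀ x ∈ U, Metric.infDist x Uᶜ / ρ x ≤ m) :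
    ∀ x : M, dist x x₀ ≤ Metric.infDist x₀ Uᶜ / 2 → x ∈ U ∧ ρ x₀ / 2 ≤ ρ x := by
  intro x hx
  have hlip : Metric.infDist x₀ Uᶜ ≤ Metric.infDist x Uᶜ + dist x₀ x :=
    Metric.infDist_le_infDist_add_dist
  rw [dist_comm] at hlip
  have hlow : Metric.infDist x₀ Uᶜ / 2 ≤ Metric.infDist x Uᶜ := by linarith
  have hxU : x ∈ U := by
    by_contra h
    have : Metric.infDist x Uᶜ = 0 := Metric.infDist_zero_of_mem h
    linarith
  refine ⟨hxU, ?_⟩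
  have hρx := hρ x hxU
  have hρ₀ := hρ x₀ hx₀
  have h1 := hsup x hxU
  rw [hm, div_le_div_iff₀ hρx hρ₀] at h1
  nlinarith
end

section
/- (Uniform covering estimate; Claim of Section 2 in abstract form.) Let n ≥ 1 and let (M,d) be a metric space with the intermediate-point property (for every P ∈ M, r ≥ 0, and x ∈ B(P, r + 1/6), there exists x' ∈ B(P, r) with d(x, x') ≤ 1/6), and suppose every point P ∈ M admits a map Ψ_P : ℝⁿ → M with Ψ_P(0) = P, with d(Ψ_P(z), Ψ_P(w)) ≤ 2‖z − w‖ for all z, w ∈ B̄(0, 1/2), and with B(P, 1/3) ⊆ Ψ_P(B(0, 5/12)). Then there exists a constant C > 0 depending only on n such that for every P ∈ M, every r ≥ 1, and every 0 < ε ≤ 1/3, the ball B(P, r) can be covered by at most C·e^{C r}·ε^{−n} balls of radius ε. -/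
open Metric MeasureTheory

/-- Any `δ`-separated finset of the Euclidean ball of radius `1/2` has at most
`(1/δ + 1)^n` elements. -/
lemma stmt6_sep_card_le (n : ℕ) {δ : ℝ} (hδ : 0 < δ)
    (T : Finset (EuclideanSpace ℝ (Fin n)))
    (hT : ∀ t ∈ T, t ∈ closedBall (0 : EuclideanSpace ℝ (Fin n)) (1/2))
    (hsep : ∀ a ∈ T, ∀ b ∈ T, a ≠ b → δ ≤ dist a b) :
    (T.card : ℝ) ≤ (1/δ + 1) ^ n := by
  classical
  have hv0 : volume (ball (0 : EuclideanSpace ℝ (Fin n)) 1) ≠ 0 := (measure_ball_pos _ _ one_pos).ne'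
  have hvt : volume (ball (0 : EuclideanSpace ℝ (Fin n)) 1) ≠ ⊤ := measure_ball_lt_top.ne
  have hdisj : (T : Set (EuclideanSpace ℝ (Fin n))).Pairwise (Function.onFun Disjoint fun t => ball t (δ/2)) := by
    intro a ha b hb hab
    exact ball_disjoint_ball (by linarith [hsep a ha b hb hab])
  have hsub : (⋃ t ∈ T, ball t (δ/2)) ⊆ ball (0 : EuclideanSpace ℝ (Fin n)) (1/2 + δ/2) := by
    intro x hx
    simp only [Set.mem_iUnion] at hx
    obtain ⟨t, ht, hxt⟩ := hx
    have h1 := hT t ht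
    rw [mem_closedBall] at h1
    rw [mem_ball] at hxt ⊢
    calc dist x 0 ≤ dist x t + dist t 0 := dist_triangle _ _ _
      _ < 1/2 + δ/2 := by linarith
  have heach : ∀ t ∈ T, volume (ball t (δ/2))
      = ENNReal.ofReal ((δ/2)^n) * volume (ball (0 : EuclideanSpace ℝ (Fin n)) 1) := fun t _ => by
    rw [Measure.addHaar_ball_of_pos volume t (by linarith), finrank_euclideanSpace_fin]
  have h1 : volume (⋃ t ∈ T, ball t (δ/2))
      = (T.card : ENNReal) * (ENNReal.ofReal ((δ/2)^n) * volume (ball (0 : EuclideanSpace ℝ (Fin n)) 1)) := by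
    rw [measure_biUnion_finset hdisj (fun t _ => measurableSet_ball),
      Finset.sum_congr rfl heach, Finset.sum_const, nsmul_eq_mul]
  have h2 : volume (ball (0 : EuclideanSpace ℝ (Fin n)) (1/2 + δ/2))
      = ENNReal.ofReal ((1/2 + δ/2)^n) * volume (ball (0 : EuclideanSpace ℝ (Fin n)) 1) := by
    rw [Measure.addHaar_ball_of_pos volume _ (by linarith), finrank_euclideanSpace_fin]
  have h3 : (T.card : ENNReal) * ENNReal.ofReal ((δ/2)^n) ≤ ENNReal.ofReal ((1/2 + δ/2)^n) := by
    have hm : volume (⋃ t ∈ T, ball t (δ/2))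
        ≤ volume (ball (0 : EuclideanSpace ℝ (Fin n)) (1/2 + δ/2)) := measure_mono hsub
    rw [h1, h2, ← mul_assoc] at hm
    exact (ENNReal.mul_le_mul_iff_left hv0 hvt).mp hm
  have h4 : (T.card : ℝ) * (δ/2)^n ≤ (1/2 + δ/2)^n := by
    rw [← ENNReal.ofReal_natCast, ← ENNReal.ofReal_mul (by positivity)] at h3
    exact (ENNReal.ofReal_le_ofReal_iff (by positivity)).mp h3
  have hδn : (0:ℝ) < (δ/2)^n := by positivity
  have h5 : (T.card : ℝ) ≤ ((1/2 + δ/2)/(δ/2))^n := by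
    rw [div_pow, le_div_iff₀ hδn]
    exact h4
  have heq : (1/2 + δ/2)/(δ/2) = 1/δ + 1 := by
    field_simp
  rwa [heq] at h5

/-- Quantitative net: the Euclidean ball of radius `1/2` can be covered by at most
`(1/δ + 1)^n` open balls of radius `δ` with centers in the closed ball. -/
lemma stmt6_euc_net (n : ℕ) {δ : ℝ} (hδ : 0 < δ) :
    ∃ T : Finset (EuclideanSpace ℝ (Fin n)),
      (T.card : ℝ) ≤ (1/δ + 1) ^ n ∧
      (∀ t ∈ T, t ∈ closedBall (0 : EuclideanSpace ℝ (Fin n)) (1/2)) ∧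
      closedBall (0 : EuclideanSpace ℝ (Fin n)) (1/2) ⊆ ⋃ t ∈ T, ball t δ := by
  classical
  set P : Finset (EuclideanSpace ℝ (Fin n)) → Prop := fun T =>
    (∀ t ∈ T, t ∈ closedBall (0 : EuclideanSpace ℝ (Fin n)) (1/2)) ∧
    ∀ a ∈ T, ∀ b ∈ T, a ≠ b → δ ≤ dist a b with hP
  have hbdd : ∀ T, P T → T.card ≤ ⌈(1/δ + 1)^n⌉₊ := by
    intro T hT
    have h := stmt6_sep_card_le n hδ T hT.1 hT.2
    exact_mod_cast h.trans (Nat.le_ceil _)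
  set S : Set ℕ := {k | ∃ T, P T ∧ T.card = k} with hS
  have hS0 : (0:ℕ) ∈ S := ⟨∅, ⟨by simp, by simp⟩, rfl⟩
  have hSb : BddAbove S := ⟨⌈(1/δ + 1)^n⌉₊, fun k hk => by
    obtain ⟨T, hT, rfl⟩ := hk; exact hbdd T hT⟩
  obtain ⟨T, hT, hTcard⟩ := Nat.sSup_mem ⟨0, hS0⟩ hSb
  refine ⟨T, stmt6_sep_card_le n hδ T hT.1 hT.2, hT.1, ?_⟩
  intro x hx
  by_contra hnot
  rw [Set.mem_iUnion₂] at hnot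
  push_neg at hnot
  have hfar : ∀ t ∈ T, δ ≤ dist x t := fun t ht => by
    have := hnot t ht
    rw [mem_ball] at this
    linarith [not_lt.mp this]
  have hxT : x ∉ T := by
    intro hxT
    have := hfar x hxT
    simp at this
    linarith
  have hPins : P (insert x T) := by
    constructor
    · intro t ht
      rcases Finset.mem_insert.mp ht with rfl | ht
      · exact hx
      · exact hT.1 t ht
    · intro a ha b hb hab
      rcases Finset.mem_insert.mp ha with ha' | ha'
      · rcases Finset.mem_insert.mp hb with hb' | hb'
        · rw [ha', hb'] at hab; exact absurd rfl hab
        · rw [ha']; exact hfar b hb'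
      · rcases Finset.mem_insert.mp hb with hb' | hb'
        · rw [hb', dist_comm]; exact hfar a ha'
        · exact hT.2 a ha' b hb' hab
  have hmem : (insert x T).card ∈ S := ⟨_, hPins, rfl⟩
  have hle := le_csSup hSb hmem
  rw [Finset.card_insert_of_notMem hxT, hTcard] at hle
  omega

/-- Via the chart at `Q`, the ball `B(Q,1/3)` is covered by at most `(2/δ+1)^n`
balls of radius `δ`. -/
lemma stmt6_chart_cover {n : ℕ} {M : Type} [MetricSpace M]
    (hch : ∀ P : M, ∃ Ψ : EuclideanSpace ℝ (Fin n) → M, Ψ 0 = P ∧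
      (∀ z ∈ closedBall (0 : EuclideanSpace ℝ (Fin n)) (1/2),
        ∀ w ∈ closedBall (0 : EuclideanSpace ℝ (Fin n)) (1/2),
          dist (Ψ z) (Ψ w) ≤ 2 * dist z w) ∧
      ball P (1/3) ⊆ Ψ '' ball (0 : EuclideanSpace ℝ (Fin n)) (5/12))
    (Q : M) {δ : ℝ} (hδ : 0 < δ) :
    ∃ s : Finset M, (s.card : ℝ) ≤ (2/δ + 1) ^ n ∧
      ball Q (1/3) ⊆ ⋃ x ∈ s, ball x δ := by
  classical
  obtain ⟨Ψ, hΨ0, hlip, hsurj⟩ := hch Q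
  obtain ⟨T, hTcard, hTmem, hTcov⟩ := stmt6_euc_net n (δ := δ/2) (by linarith)
  refine ⟨T.image Ψ, ?_, ?_⟩
  · calc ((T.image Ψ).card : ℝ) ≤ (T.card : ℝ) := by exact_mod_cast Finset.card_image_le
      _ ≤ (1/(δ/2) + 1)^n := hTcard
      _ = (2/δ + 1)^n := by rw [one_div_div]
  · intro x hx
    obtain ⟨z, hz, rfl⟩ := hsurj hx
    have hz' : z ∈ closedBall (0 : EuclideanSpace ℝ (Fin n)) (1/2) :=
      closedBall_subset_closedBall (by norm_num) (ball_subset_closedBall hz)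
    obtain ⟨t, ht, hzt⟩ := Set.mem_iUnion₂.mp (hTcov hz')
    refine Set.mem_iUnion₂.mpr ⟨Ψ t, Finset.mem_image_of_mem Ψ ht, ?_⟩
    rw [mem_ball]
    rw [mem_ball] at hzt
    calc dist (Ψ z) (Ψ t) ≤ 2 * dist z t := hlip z hz' t (hTmem t ht)
      _ < 2 * (δ/2) := by linarith
      _ = δ := by ring

/-- Iterated covering: `B(P, 1/6 + k/6)` is covered by `13^(n*k)` balls of radius `1/6`. -/
lemma stmt6_cover_sixth {n : ℕ} {M : Type} [MetricSpace M]
    (hint : ∀ (P : M) (r : ℝ), 0 ≤ r → ∀ x ∈ ball P (r + 1/6),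
      ∃ x' ∈ ball P r, dist x x' ≤ 1/6)
    (g : M → Finset M)
    (hgcard : ∀ Q : M, ((g Q).card : ℝ) ≤ (13:ℝ) ^ n)
    (hgcov : ∀ Q : M, ball Q (1/3) ⊆ ⋃ x ∈ g Q, ball x (1/6))
    (P : M) (k : ℕ) :
    ∃ s : Finset M, (s.card : ℝ) ≤ (13:ℝ) ^ (n*k) ∧
      ball P (1/6 + k/6) ⊆ ⋃ x ∈ s, ball x (1/6) := by
  classical
  induction k with
  | zero => exact ⟨{P}, by simp, by simp⟩
  | succ k ih =>
    obtain ⟨s, hscard, hscov⟩ := ih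
    refine ⟨s.biUnion g, ?_, ?_⟩
    · calc ((s.biUnion g).card : ℝ) ≤ ∑ x ∈ s, ((g x).card : ℝ) := by
            exact_mod_cast Finset.card_biUnion_le
        _ ≤ ∑ _x ∈ s, (13:ℝ)^n := Finset.sum_le_sum fun x _ => hgcard x
        _ = (s.card : ℝ) * 13^n := by rw [Finset.sum_const, nsmul_eq_mul]
        _ ≤ 13^(n*k) * 13^n := by
            apply mul_le_mul_of_nonneg_right hscard (by positivity)
        _ = 13^(n*(k+1)) := by rw [← pow_add]; ring_nf
    · intro x hx
      have hx' : x ∈ ball P ((1/6 + (k:ℝ)/6) + 1/6) := by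
        rw [mem_ball] at hx ⊢
        have h : ((k:ℝ)+1)/6 = (k:ℝ)/6 + 1/6 := by ring
        push_cast at hx
        linarith
      obtain ⟨x', hx'mem, hdx⟩ := hint P (1/6 + (k:ℝ)/6) (by positivity) x hx'
      obtain ⟨y, hy, hy'⟩ := Set.mem_iUnion₂.mp (hscov hx'mem)
      have hxy : x ∈ ball y (1/3) := by
        rw [mem_ball] at hy' ⊢
        calc dist x y ≤ dist x x' + dist x' y := dist_triangle _ _ _
          _ < 1/3 := by linarith
      obtain ⟨z, hz, hxz⟩ := Set.mem_iUnion₂.mp (hgcov y hxy)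
      exact Set.mem_iUnion₂.mpr ⟨z, Finset.mem_biUnion.mpr ⟨y, hy, hz⟩, hxz⟩

/-- Uniform covering estimate: under the intermediate-point property and uniform
Lipschitz-chart hypotheses at every point, there is a constant C = C(n) such that
every ball B(P,r) with r ≥ 1 can be covered by at most C·e^{Cr}·ε⁻ⁿ balls of radius
ε, for every 0 < ε ≤ 1/3. -/
theorem stmt_6 (n : ℕ) (hn : 1 ≤ n) :
    ∃ C : ℝ, 0 < C ∧
      ∀ (M : Type) [MetricSpace M],
        (∀ (P : M) (r : ℝ), 0 ≤ r → ∀ x ∈ Metric.ball P (r + 1/6),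
          ∃ x' ∈ Metric.ball P r, dist x x' ≤ 1/6) →
        (∀ P : M, ∃ Ψ : EuclideanSpace ℝ (Fin n) → M, Ψ 0 = P ∧
          (∀ z ∈ Metric.closedBall (0 : EuclideanSpace ℝ (Fin n)) (1/2),
            ∀ w ∈ Metric.closedBall (0 : EuclideanSpace ℝ (Fin n)) (1/2),
              dist (Ψ z) (Ψ w) ≤ 2 * dist z w) ∧
          Metric.ball P (1/3) ⊆ Ψ '' Metric.ball (0 : EuclideanSpace ℝ (Fin n)) (5/12)) →
        ∀ (P : M) (r ε : ℝ), 1 ≤ r → 0 < ε → ε ≤ 1/3 →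
          ∃ s : Finset M, (s.card : ℝ) ≤ C * Real.exp (C * r) / ε ^ n ∧
            Metric.ball P r ⊆ ⋃ x ∈ s, Metric.ball x ε := by
  classical
  refine ⟨3^n * 13^n + 78 * n, by positivity, ?_⟩
  set C : ℝ := 3^n * 13^n + 78 * n with hC
  intro M _ hint hch P r ε hr hε hε3
  -- the radius-1/6 covering function via charts
  have hg : ∀ Q : M, ∃ s : Finset M, (s.card : ℝ) ≤ (2/(1/6) + 1) ^ n ∧
      ball Q (1/3) ⊆ ⋃ x ∈ s, ball x (1/6) :=
    fun Q => stmt6_chart_cover hch Q (by norm_num)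
  choose g hgcard hgcov using hg
  have hgcard' : ∀ Q : M, ((g Q).card : ℝ) ≤ (13:ℝ)^n := fun Q => by
    have := hgcard Q; norm_num at this; exact this
  -- cover B(P,r) by 1/6-balls
  set k : ℕ := ⌈6*r⌉₊ with hk
  have hk1 : 6*r ≤ (k:ℝ) := Nat.le_ceil _
  have hk2 : (k:ℝ) ≤ 6*r + 1 := (Nat.ceil_lt_add_one (by linarith)).le
  obtain ⟨s₁, hs₁card, hs₁cov⟩ := stmt6_cover_sixth hint g hgcard' hgcov P k
  -- refine each 1/6-ball into ε-balls
  have hg2 : ∀ Q : M, ∃ s : Finset M, (s.card : ℝ) ≤ (2/ε + 1) ^ n ∧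
      ball Q (1/3) ⊆ ⋃ x ∈ s, ball x ε :=
    fun Q => stmt6_chart_cover hch Q hε
  choose g2 hg2card hg2cov using hg2
  refine ⟨s₁.biUnion g2, ?_, ?_⟩
  · -- cardinality estimate
    have hεinv : (1:ℝ) ≤ 1/ε := by
      rw [le_div_iff₀ hε]; linarith
    have hstep1 : ((s₁.biUnion g2).card : ℝ) ≤ (13:ℝ)^(n*k) * (2/ε + 1)^n := by
      calc ((s₁.biUnion g2).card : ℝ) ≤ ∑ x ∈ s₁, ((g2 x).card : ℝ) := by
            exact_mod_cast Finset.card_biUnion_le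
        _ ≤ ∑ _x ∈ s₁, (2/ε + 1)^n := Finset.sum_le_sum fun x _ => hg2card x
        _ = (s₁.card : ℝ) * (2/ε + 1)^n := by rw [Finset.sum_const, nsmul_eq_mul]
        _ ≤ (13:ℝ)^(n*k) * (2/ε + 1)^n := by
            apply mul_le_mul_of_nonneg_right hs₁card (by positivity)
    have hstep2 : (2/ε + 1)^n ≤ 3^n / ε^n := by
      rw [← div_pow]
      apply pow_le_pow_left₀ (by positivity)
      have h3ε : (3:ℝ)/ε = 2/ε + 1/ε := by ring
      rw [h3ε]
      have : (1:ℝ)/ε ≥ 1 := hεinv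
      linarith
    have hlog13 : Real.log 13 ≤ 12 := by
      have := Real.log_le_sub_one_of_pos (x := 13) (by norm_num)
      linarith
    have hlog13' : (0:ℝ) ≤ Real.log 13 := Real.log_nonneg (by norm_num)
    have hstep3 : (13:ℝ)^(n*k) ≤ 13^n * Real.exp (C * r) := by
      have he1 : (13:ℝ)^(n*k) = Real.exp ((n*k : ℕ) * Real.log 13) := by
        rw [← Real.log_pow, Real.exp_log (by positivity)]
      have he2 : (13:ℝ)^n = Real.exp ((n:ℝ) * Real.log 13) := by
        rw [← Real.log_pow, Real.exp_log (by positivity)]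
      rw [he1, he2, ← Real.exp_add]
      apply Real.exp_le_exp.mpr
      have hnk : ((n*k : ℕ) : ℝ) = (n:ℝ) * (k:ℝ) := by push_cast; ring
      rw [hnk]
      have hn1 : (1:ℝ) ≤ (n:ℝ) := by exact_mod_cast hn
      have hCge : 78 * (n:ℝ) ≤ C := by
        have h0 : (0:ℝ) ≤ 3^n * 13^n := by positivity
        rw [hC]; linarith
      have hr0 : (0:ℝ) ≤ r := by linarith
      have h6nr : (0:ℝ) ≤ 6 * (n:ℝ) * r := mul_nonneg (by positivity) hr0
      have key : (n:ℝ) * (k:ℝ) * Real.log 13 ≤ (n:ℝ) * Real.log 13 + 72 * (n:ℝ) * r := by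
        have h1 : (n:ℝ) * (k:ℝ) * Real.log 13 ≤ (n:ℝ) * (6*r + 1) * Real.log 13 := by
          apply mul_le_mul_of_nonneg_right _ hlog13'
          apply mul_le_mul_of_nonneg_left hk2 (by linarith)
        have h2 : (n:ℝ) * (6*r + 1) * Real.log 13
            = 6 * (n:ℝ) * r * Real.log 13 + (n:ℝ) * Real.log 13 := by ring
        have h3 : 6 * (n:ℝ) * r * Real.log 13 ≤ 6 * (n:ℝ) * r * 12 :=
          mul_le_mul_of_nonneg_left hlog13 h6nr
        linarith
      have hCr : 72 * (n:ℝ) * r ≤ C * r := by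
        apply mul_le_mul_of_nonneg_right _ (by linarith)
        linarith [hCge]
      linarith
    have hεn : (0:ℝ) < ε^n := by positivity
    have hCge2 : (3:ℝ)^n * 13^n ≤ C := by
      have h0 : (0:ℝ) ≤ 78 * n := by positivity
      rw [hC]; linarith
    calc ((s₁.biUnion g2).card : ℝ)
        ≤ (13:ℝ)^(n*k) * (2/ε + 1)^n := hstep1
      _ ≤ (13^n * Real.exp (C * r)) * (3^n / ε^n) := by
          apply mul_le_mul hstep3 hstep2 (by positivity) (by positivity)
      _ = (3^n * 13^n) * Real.exp (C * r) / ε^n := by ring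
      _ ≤ C * Real.exp (C * r) / ε^n :=
          (div_le_div_iff_of_pos_right hεn).mpr (mul_le_mul_of_nonneg_right hCge2 (Real.exp_nonneg _))
  · -- covering
    intro x hx
    have hx' : x ∈ ball P (1/6 + (k:ℝ)/6) := by
      rw [mem_ball] at hx ⊢
      have : r ≤ (k:ℝ)/6 := by linarith
      linarith
    obtain ⟨y, hy, hy'⟩ := Set.mem_iUnion₂.mp (hs₁cov hx')
    have hxy : x ∈ ball y (1/3) := ball_subset_ball (by norm_num) hy'
    obtain ⟨z, hz, hxz⟩ := Set.mem_iUnion₂.mp (hg2cov y hxy)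
    exact Set.mem_iUnion₂.mpr ⟨z, Finset.mem_biUnion.mpr ⟨y, hy, hz⟩, hxz⟩
end

section
/- (Cauchy subsequences in a glued space.) Let (Y,d) be a metric space, let (K_i)_{i≥1} be subsets of Y with marked points w_i ∈ K_i such that: (a) d(w_i, w_j) ≤ 2^{−i} whenever i ≤ j; (b) for every i and every R > 0 the set K_i ∩ B̄(w_i, R) is compact; (c) for all i ≤ j, every y ∈ K_j with d(y, w_j) ≤ i satisfies infDist(y, K_i) ≤ 2^{−i}. Then every sequence (y_k) in Y with y_k ∈ K_{i_k} for some indices i_k, and with sup_k d(y_k, w_1) < ∞, has a Cauchy subsequence. -/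
open Metric Set

/-- A sequence whose range is totally bounded has a Cauchy subsequence. -/
lemma aux_cauchy_subseq {Y : Type*} [MetricSpace Y] (u : ℕ → Y)
    (h : TotallyBounded (Set.range u)) :
    ∃ φ : ℕ → ℕ, StrictMono φ ∧ CauchySeq (u ∘ φ) := by
  let v : ℕ → UniformSpace.Completion Y := fun n => (u n : UniformSpace.Completion Y)
  have hv : TotallyBounded (Set.range v) := by
    have := h.image (UniformSpace.Completion.uniformContinuous_coe Y)
    rwa [← Set.range_comp] at this
  have hcpt : IsCompact (closure (Set.range v)) :=
    TotallyBounded.isCompact_of_isClosed hv.closure isClosed_closure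
  obtain ⟨x, -, φ, hφ, hconv⟩ := hcpt.isSeqCompact fun n => subset_closure ⟨n, rfl⟩
  refine ⟨φ, hφ, ?_⟩
  have hcv : CauchySeq (v ∘ φ) := hconv.cauchySeq
  have hui := UniformSpace.Completion.isUniformInducing_coe Y
  have hmap : Cauchy (Filter.map ((↑) : Y → UniformSpace.Completion Y)
      (Filter.map (u ∘ φ) Filter.atTop)) := by
    rw [Filter.map_map]
    exact hcv
  exact hui.cauchy_map_iff.mp hmap

/-- Cauchy subsequences in a glued space: given subsets K_i with marked points w_i
such that the marked points form an (exponentially fast) approximating net, bounded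
balls in each K_i are compact, and points of K_j near w_j are 2⁻ⁱ-close to K_i for
i ≤ j, every bounded sequence with y_k ∈ K_{i_k} has a Cauchy subsequence. -/
theorem stmt_7 (Y : Type*) [MetricSpace Y] (K : ℕ → Set Y) (w : ℕ → Y)
    (hw : ∀ i, 1 ≤ i → w i ∈ K i)
    (ha : ∀ i j, 1 ≤ i → i ≤ j → dist (w i) (w j) ≤ (2 : ℝ) ^ (-(i : ℤ)))
    (hb : ∀ i, 1 ≤ i → ∀ R : ℝ, 0 < R → IsCompact (K i ∩ Metric.closedBall (w i) R))
    (hc : ∀ i j, 1 ≤ i → i ≤ j → ∀ y ∈ K j, dist y (w j) ≤ (i : ℝ) →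
      Metric.infDist y (K i) ≤ (2 : ℝ) ^ (-(i : ℤ)))
    (y : ℕ → Y) (idx : ℕ → ℕ) (hidx : ∀ k, 1 ≤ idx k) (hy : ∀ k, y k ∈ K (idx k))
    (hbdd : ∃ D : ℝ, ∀ k, dist (y k) (w 1) ≤ D) :
    ∃ φ : ℕ → ℕ, StrictMono φ ∧ CauchySeq (y ∘ φ) := by
  obtain ⟨D, hD⟩ := hbdd
  have hD0 : 0 ≤ D := le_trans dist_nonneg (hD 0)
  -- the distance from y k to its own basepoint is at most D + 1
  have hdk : ∀ k, dist (y k) (w (idx k)) ≤ D + 1 := by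
    intro k
    have h1 : dist (w 1) (w (idx k)) ≤ (2 : ℝ) ^ (-(1 : ℤ)) := by
      simpa using ha 1 (idx k) le_rfl (hidx k)
    have : (2 : ℝ) ^ (-(1 : ℤ)) = 1 / 2 := by norm_num
    calc dist (y k) (w (idx k)) ≤ dist (y k) (w 1) + dist (w 1) (w (idx k)) :=
          dist_triangle _ _ _
      _ ≤ D + 1 := by rw [this] at h1; linarith [hD k]
  have htb : TotallyBounded (Set.range y) := by
    rw [Metric.totallyBounded_iff]
    intro ε hε
    obtain ⟨n, hn⟩ := exists_pow_lt_of_lt_one (show (0:ℝ) < ε/4 by linarith)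
      (by norm_num : (1/2 : ℝ) < 1)
    set i : ℕ := max (max 1 n) ⌈D + 1⌉₊ with hidef
    have hi1 : 1 ≤ i := le_trans (le_max_left 1 n) (le_max_left _ _)
    have hni : n ≤ i := le_trans (le_max_right 1 n) (le_max_left _ _)
    have hiD : D + 1 ≤ (i : ℝ) := le_trans (Nat.le_ceil _)
      (Nat.cast_le.2 (le_max_right _ _))
    have hpoweq : (2 : ℝ) ^ (-(i : ℤ)) = (1/2 : ℝ) ^ i := by
      rw [zpow_neg, zpow_natCast, one_div, inv_pow]
    have hpow : (2 : ℝ) ^ (-(i : ℤ)) ≤ ε / 4 := by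
      rw [hpoweq]
      refine le_of_lt (lt_of_le_of_lt ?_ hn)
      exact pow_le_pow_of_le_one (by norm_num) (by norm_num) hni
    have hpowhalf : (2 : ℝ) ^ (-(i : ℤ)) ≤ 1 / 2 := by
      rw [hpoweq]
      calc (1/2 : ℝ) ^ i ≤ (1/2 : ℝ) ^ 1 :=
            pow_le_pow_of_le_one (by norm_num) (by norm_num) hi1
        _ = 1 / 2 := pow_one _
    -- the compact pieces
    have hA : IsCompact (⋃ j ∈ Finset.Icc 1 i, (K j ∩ Metric.closedBall (w j) (D + 1))) :=
      (Finset.Icc 1 i).isCompact_biUnion fun j hj =>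
        hb j (Finset.mem_Icc.mp hj).1 (D + 1) (by linarith)
    have hC : IsCompact (K i ∩ Metric.closedBall (w i) (D + 2)) :=
      hb i hi1 (D + 2) (by linarith)
    obtain ⟨t₁, ht₁f, ht₁⟩ := Metric.totallyBounded_iff.mp hA.totallyBounded ε hε
    obtain ⟨t₂, ht₂f, ht₂⟩ := Metric.totallyBounded_iff.mp hC.totallyBounded (ε/2)
      (by linarith)
    refine ⟨t₁ ∪ t₂, ht₁f.union ht₂f, ?_⟩
    rintro x ⟨k, rfl⟩
    by_cases hcase : idx k ≤ i
    · have hx : y k ∈ ⋃ j ∈ Finset.Icc 1 i, (K j ∩ Metric.closedBall (w j) (D + 1)) := by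
        refine Set.mem_biUnion (Finset.mem_Icc.mpr ⟨hidx k, hcase⟩) ⟨hy k, ?_⟩
        exact Metric.mem_closedBall.mpr (hdk k)
      obtain ⟨b, hb', hxb⟩ := Set.mem_iUnion₂.mp (ht₁ hx)
      exact Set.mem_iUnion₂.mpr ⟨b, Set.mem_union_left _ hb', hxb⟩
    · push_neg at hcase
      have hle : i ≤ idx k := le_of_lt hcase
      have hinf : Metric.infDist (y k) (K i) ≤ (2 : ℝ) ^ (-(i : ℤ)) :=
        hc i (idx k) hi1 hle (y k) (hy k) (le_trans (hdk k) hiD)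
      have hne : (K i).Nonempty := ⟨w i, hw i hi1⟩
      have hlt : Metric.infDist (y k) (K i) < 2 * (2 : ℝ) ^ (-(i : ℤ)) := by
        have : (0:ℝ) < (2 : ℝ) ^ (-(i : ℤ)) := by positivity
        linarith
      obtain ⟨z, hzK, hz⟩ := (Metric.infDist_lt_iff hne).mp hlt
      have hz2 : dist (y k) z < ε / 2 := lt_of_lt_of_le hz (by linarith)
      have hz1 : dist (y k) z ≤ 1 := le_of_lt (lt_of_lt_of_le hz (by linarith))
      have h1i : dist (w 1) (w i) ≤ 1 / 2 := by
        have := ha 1 i le_rfl hi1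
        have h2 : (2 : ℝ) ^ (-(1 : ℤ)) = 1 / 2 := by norm_num
        linarith [h2 ▸ this]
      have hzC : z ∈ K i ∩ Metric.closedBall (w i) (D + 2) := by
        refine ⟨hzK, Metric.mem_closedBall.mpr ?_⟩
        calc dist z (w i) ≤ dist z (y k) + dist (y k) (w 1) + dist (w 1) (w i) :=
              dist_triangle4 _ _ _ _
          _ ≤ 1 + D + (1/2) := by
              rw [dist_comm z (y k)]
              exact add_le_add (add_le_add hz1 (hD k)) h1i
          _ ≤ D + 2 := by linarith
      obtain ⟨b, hb', hzb⟩ := Set.mem_iUnion₂.mp (ht₂ hzC)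
      refine Set.mem_iUnion₂.mpr ⟨b, Set.mem_union_right _ hb', ?_⟩
      have : dist (y k) b ≤ dist (y k) z + dist z b := dist_triangle _ _ _
      have hzb' : dist z b < ε / 2 := Metric.mem_ball.mp hzb
      exact Metric.mem_ball.mpr (by linarith)
  exact aux_cauchy_subseq y htb
end

section
/- (Ehrling-type interpolation of Hölder norms.) Let n ≥ 1, R > 0, and 0 < α < α₁ ≤ 1, and let B = B(0,R) ⊂ ℝⁿ. For every δ > 0 there exists a constant C > 0, depending only on n, R, α, α₁, and δ, such that for every function u : ℝⁿ → ℝ that is differentiable on B with M₀ := sup_{x∈B} |u(x)| < ∞, M₁ := sup_{x∈B} ‖Du(x)‖ < ∞, and H := sup_{x≠y∈B} ‖Du(x) − Du(y)‖/‖x−y‖^{α₁} < ∞, one has M₀ + M₁ + sup_{x≠y∈B} ‖Du(x) − Du(y)‖/‖x−y‖^{α} ≤ C·M₀ + δ·(M₀ + M₁ + H). -/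
set_option maxHeartbeats 1000000


/-- Ehrling-type interpolation of Hölder norms on a Euclidean ball: for 0 < α < α₁ ≤ 1
and every δ > 0 there is C = C(n,R,α,α₁,δ) such that, with M₀, M₁, H the (finite)
suprema of |u|, ‖Du‖ and the α₁-Hölder seminorm of Du on B(0,R), one has
M₀ + M₁ + [Du]_{α} ≤ C·M₀ + δ·(M₀ + M₁ + H). -/
theorem stmt_8 (n : ℕ) (hn : 1 ≤ n) (R : ℝ) (hR : 0 < R) (α α₁ : ℝ)
    (hα : 0 < α) (hαα₁ : α < α₁) (hα₁ : α₁ ≤ 1) (δ : ℝ) (hδ : 0 < δ) :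
    ∃ C : ℝ, 0 < C ∧
      ∀ (u : EuclideanSpace ℝ (Fin n) → ℝ) (M₀ M₁ H : ℝ),
        (∀ x ∈ Metric.ball (0 : EuclideanSpace ℝ (Fin n)) R, DifferentiableAt ℝ u x) →
        IsLUB ((fun x => |u x|) '' Metric.ball (0 : EuclideanSpace ℝ (Fin n)) R) M₀ →
        IsLUB ((fun x => ‖fderiv ℝ u x‖) '' Metric.ball (0 : EuclideanSpace ℝ (Fin n)) R) M₁ →
        IsLUB ((fun p : EuclideanSpace ℝ (Fin n) × EuclideanSpace ℝ (Fin n) =>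
            ‖fderiv ℝ u p.1 - fderiv ℝ u p.2‖ / ‖p.1 - p.2‖ ^ α₁) ''
          {p : EuclideanSpace ℝ (Fin n) × EuclideanSpace ℝ (Fin n) |
            p.1 ∈ Metric.ball (0 : EuclideanSpace ℝ (Fin n)) R ∧
            p.2 ∈ Metric.ball (0 : EuclideanSpace ℝ (Fin n)) R ∧ p.1 ≠ p.2}) H →
        ∀ x ∈ Metric.ball (0 : EuclideanSpace ℝ (Fin n)) R,
          ∀ y ∈ Metric.ball (0 : EuclideanSpace ℝ (Fin n)) R, x ≠ y →
            M₀ + M₁ + ‖fderiv ℝ u x - fderiv ℝ u y‖ / ‖x - y‖ ^ α ≤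
              C * M₀ + δ * (M₀ + M₁ + H) := by
  have hα₁0 : 0 < α₁ := lt_trans hα hαα₁
  have hdiff0 : 0 < α₁ - α := sub_pos.2 hαα₁
  set t : ℝ := min R ((δ / 2) ^ (α₁ - α)⁻¹) with ht_def
  have ht : 0 < t := lt_min hR (Real.rpow_pos_of_pos (by linarith) _)
  have htα : 0 < t ^ α := Real.rpow_pos_of_pos ht α
  set K : ℝ := 1 + 2 / t ^ α with hK_def
  have hK : 0 < K := by positivity
  set s : ℝ := min (R / 2) ((δ / (4 * K)) ^ α₁⁻¹) with hs_def
  have hδ4K : 0 < δ / (4 * K) := by positivity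
  have hs : 0 < s := lt_min (by linarith) (Real.rpow_pos_of_pos hδ4K _)
  have hsR2 : s ≤ R / 2 := min_le_left _ _
  have hsα₁ : s ^ α₁ ≤ δ / (4 * K) := by
    calc s ^ α₁ ≤ ((δ / (4 * K)) ^ α₁⁻¹) ^ α₁ :=
          Real.rpow_le_rpow hs.le (min_le_right _ _) hα₁0.le
      _ = δ / (4 * K) := Real.rpow_inv_rpow hδ4K.le hα₁0.ne'
  refine ⟨1 + 2 * K / s, by positivity, ?_⟩
  intro u M₀ M₁ H hdiff hM₀ hM₁ hH x hx y hy hxy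
  have hM₀ub : ∀ z ∈ Metric.ball (0 : EuclideanSpace ℝ (Fin n)) R, |u z| ≤ M₀ :=
    fun z hz => hM₀.1 ⟨z, hz, rfl⟩
  have hM₁ub : ∀ z ∈ Metric.ball (0 : EuclideanSpace ℝ (Fin n)) R, ‖fderiv ℝ u z‖ ≤ M₁ :=
    fun z hz => hM₁.1 ⟨z, hz, rfl⟩
  have hM₀0 : 0 ≤ M₀ := le_trans (abs_nonneg _) (hM₀ub 0 (Metric.mem_ball_self hR))
  have hM₁0 : 0 ≤ M₁ := le_trans (norm_nonneg _) (hM₁ub 0 (Metric.mem_ball_self hR))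
  have hH0 : 0 ≤ H := by
    set v : EuclideanSpace ℝ (Fin n) := EuclideanSpace.single ⟨0, hn⟩ (R / 2) with hv_def
    have hvnorm : ‖v‖ = R / 2 := by
      rw [hv_def, EuclideanSpace.norm_single]
      exact abs_of_pos (by linarith)
    have hvb : v ∈ Metric.ball (0 : EuclideanSpace ℝ (Fin n)) R := by
      rw [Metric.mem_ball, dist_zero_right, hvnorm]; linarith
    have hv0 : v ≠ 0 := by
      intro h
      rw [h, norm_zero] at hvnorm
      linarith
    refine le_trans ?_ (hH.1 ⟨(v, 0), ⟨hvb, Metric.mem_ball_self hR, hv0⟩, rfl⟩)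
    positivity
  have hHub : ∀ z ∈ Metric.ball (0 : EuclideanSpace ℝ (Fin n)) R,
      ∀ w ∈ Metric.ball (0 : EuclideanSpace ℝ (Fin n)) R,
      ‖fderiv ℝ u z - fderiv ℝ u w‖ ≤ H * ‖z - w‖ ^ α₁ := by
    intro z hz w hw
    rcases eq_or_ne z w with rfl | hzw
    · simp [Real.zero_rpow hα₁0.ne']
    · have hd : 0 < ‖z - w‖ := norm_pos_iff.2 (sub_ne_zero.2 hzw)
      have hdα : 0 < ‖z - w‖ ^ α₁ := Real.rpow_pos_of_pos hd _
      have h1 : ‖fderiv ℝ u z - fderiv ℝ u w‖ / ‖z - w‖ ^ α₁ ≤ H :=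
        hH.1 ⟨(z, w), ⟨hz, hw, hzw⟩, rfl⟩
      calc ‖fderiv ℝ u z - fderiv ℝ u w‖
          = ‖fderiv ℝ u z - fderiv ℝ u w‖ / ‖z - w‖ ^ α₁ * ‖z - w‖ ^ α₁ :=
            (div_mul_cancel₀ _ hdα.ne').symm
        _ ≤ H * ‖z - w‖ ^ α₁ := mul_le_mul_of_nonneg_right h1 hdα.le
  -- pointwise gradient bound
  have grad_bound : ∀ z ∈ Metric.ball (0 : EuclideanSpace ℝ (Fin n)) R,
      ‖fderiv ℝ u z‖ ≤ 2 * M₀ / s + 2 * (s ^ α₁) * H := by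
    intro z hz
    have hzn : ‖z‖ < R := by rwa [Metric.mem_ball, dist_zero_right] at hz
    set x' : EuclideanSpace ℝ (Fin n) := (1 - s / R) • z with hx'_def
    have hsR : s / R ≤ 1 / 2 := by
      rw [div_le_div_iff₀ hR (by norm_num)]; linarith
    have hsR0 : 0 < s / R := div_pos hs hR
    have hx'norm : ‖x'‖ < R - s := by
      rw [hx'_def, norm_smul, Real.norm_eq_abs, abs_of_pos (by linarith)]
      calc (1 - s / R) * ‖z‖ < (1 - s / R) * R :=
            mul_lt_mul_of_pos_left hzn (by linarith)
        _ = R - s := by field_simp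
    have hx'ball : x' ∈ Metric.ball (0 : EuclideanSpace ℝ (Fin n)) R := by
      rw [Metric.mem_ball, dist_zero_right]; linarith
    have hzx' : ‖z - x'‖ ≤ s := by
      have hzx : z - x' = (s / R) • z := by
        rw [hx'_def, sub_smul, one_smul]
        abel
      rw [hzx, norm_smul, Real.norm_eq_abs, abs_of_pos hsR0]
      calc s / R * ‖z‖ ≤ s / R * R := mul_le_mul_of_nonneg_left hzn.le hsR0.le
        _ = s := div_mul_cancel₀ _ hR.ne'
    have hshift : ‖fderiv ℝ u z - fderiv ℝ u x'‖ ≤ H * s ^ α₁ := by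
      calc ‖fderiv ℝ u z - fderiv ℝ u x'‖ ≤ H * ‖z - x'‖ ^ α₁ := hHub z hz x' hx'ball
        _ ≤ H * s ^ α₁ :=
            mul_le_mul_of_nonneg_left (Real.rpow_le_rpow (norm_nonneg _) hzx' hα₁0.le) hH0
    -- MVT on S = ball ∩ closedBall x' s
    set S := Metric.ball (0 : EuclideanSpace ℝ (Fin n)) R ∩ Metric.closedBall x' s with hS_def
    have hSconv : Convex ℝ S := (convex_ball _ _).inter (convex_closedBall _ _)
    have hbound : ∀ p ∈ S, ‖fderiv ℝ u p - fderiv ℝ u x'‖ ≤ H * s ^ α₁ := by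
      rintro p ⟨hp1, hp2⟩
      have hps : ‖p - x'‖ ≤ s := by rwa [Metric.mem_closedBall, dist_eq_norm] at hp2
      calc ‖fderiv ℝ u p - fderiv ℝ u x'‖ ≤ H * ‖p - x'‖ ^ α₁ := hHub p hp1 x' hx'ball
        _ ≤ H * s ^ α₁ :=
            mul_le_mul_of_nonneg_left (Real.rpow_le_rpow (norm_nonneg _) hps hα₁0.le) hH0
    have key : ∀ w : EuclideanSpace ℝ (Fin n), ‖w‖ = s →
        |fderiv ℝ u x' w| ≤ 2 * M₀ + H * s ^ α₁ * s := by
      intro w hw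
      have hx'S : x' ∈ S := ⟨hx'ball, Metric.mem_closedBall_self hs.le⟩
      have hywb : x' + w ∈ S := by
        constructor
        · rw [Metric.mem_ball, dist_zero_right]
          calc ‖x' + w‖ ≤ ‖x'‖ + ‖w‖ := norm_add_le _ _
            _ < R - s + s := by rw [hw]; linarith
            _ = R := by ring
        · rw [Metric.mem_closedBall, dist_eq_norm, add_sub_cancel_left, hw]
      have mvt := hSconv.norm_image_sub_le_of_norm_fderiv_le'
        (fun p hp => hdiff p hp.1) hbound hx'S hywb
      rw [add_sub_cancel_left, hw] at mvt
      have hmvt : |u (x' + w) - u x' - fderiv ℝ u x' w| ≤ H * s ^ α₁ * s := by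
        rw [← Real.norm_eq_abs]; exact mvt
      have h1 := abs_le.1 hmvt
      have h2 := abs_le.1 (hM₀ub (x' + w) hywb.1)
      have h3 := abs_le.1 (hM₀ub x' hx'ball)
      refine abs_le.2 ⟨by linarith, by linarith⟩
    have hDux' : ‖fderiv ℝ u x'‖ ≤ 2 * M₀ / s + H * s ^ α₁ := by
      refine ContinuousLinearMap.opNorm_le_bound _ (by positivity) ?_
      intro v
      rcases eq_or_ne v 0 with rfl | hv
      · simp
      · have hvn : 0 < ‖v‖ := norm_pos_iff.2 hv
        set w : EuclideanSpace ℝ (Fin n) := (s / ‖v‖) • v with hw_def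
        have hwn : ‖w‖ = s := by
          rw [hw_def, norm_smul, Real.norm_eq_abs, abs_of_pos (by positivity),
            div_mul_cancel₀ _ hvn.ne']
        have hk := key w hwn
        have hfw : fderiv ℝ u x' w = (s / ‖v‖) * fderiv ℝ u x' v := by
          rw [hw_def, map_smul]; rfl
        rw [hfw, abs_mul, abs_of_pos (by positivity : (0:ℝ) < s / ‖v‖)] at hk
        rw [Real.norm_eq_abs]
        have hs' : 0 < s / ‖v‖ := by positivity
        rw [← le_div_iff₀' hs'] at hk
        calc |fderiv ℝ u x' v| ≤ (2 * M₀ + H * s ^ α₁ * s) / (s / ‖v‖) := hk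
          _ = (2 * M₀ / s + H * s ^ α₁) * ‖v‖ := by
            field_simp
    have htri := norm_sub_norm_le (fderiv ℝ u z) (fderiv ℝ u x')
    nlinarith [hshift, hDux']
  have hM₁le : M₁ ≤ 2 * M₀ / s + 2 * (s ^ α₁) * H := by
    refine hM₁.2 ?_
    rintro a ⟨z, hz, rfl⟩
    exact grad_bound z hz
  -- the Hölder quotient bound
  have hd0 : (0:ℝ) < ‖x - y‖ := norm_pos_iff.2 (sub_ne_zero.2 hxy)
  have hdα : 0 < ‖x - y‖ ^ α := Real.rpow_pos_of_pos hd0 _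
  have hQ : ‖fderiv ℝ u x - fderiv ℝ u y‖ / ‖x - y‖ ^ α ≤ 2 / t ^ α * M₁ + δ / 2 * H := by
    have hMt : 0 ≤ 2 / t ^ α * M₁ := by positivity
    rcases le_or_gt ‖x - y‖ t with hdt | htd
    · have h1 : ‖fderiv ℝ u x - fderiv ℝ u y‖ ≤ H * ‖x - y‖ ^ α₁ := hHub x hx y hy
      have h2 : ‖x - y‖ ^ α₁ = ‖x - y‖ ^ (α₁ - α) * ‖x - y‖ ^ α := by
        rw [← Real.rpow_add hd0]; ring_nf
      have h3 : ‖x - y‖ ^ (α₁ - α) ≤ δ / 2 := by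
        calc ‖x - y‖ ^ (α₁ - α) ≤ t ^ (α₁ - α) :=
              Real.rpow_le_rpow hd0.le hdt hdiff0.le
          _ ≤ ((δ / 2) ^ (α₁ - α)⁻¹) ^ (α₁ - α) :=
              Real.rpow_le_rpow ht.le (min_le_right _ _) hdiff0.le
          _ = δ / 2 := Real.rpow_inv_rpow (by linarith) hdiff0.ne'
      have h4 : ‖fderiv ℝ u x - fderiv ℝ u y‖ / ‖x - y‖ ^ α ≤ H * ‖x - y‖ ^ (α₁ - α) := by
        rw [div_le_iff₀ hdα]
        calc ‖fderiv ℝ u x - fderiv ℝ u y‖ ≤ H * ‖x - y‖ ^ α₁ := h1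
          _ = H * ‖x - y‖ ^ (α₁ - α) * ‖x - y‖ ^ α := by rw [h2]; ring
      have h5 : H * ‖x - y‖ ^ (α₁ - α) ≤ H * (δ / 2) := mul_le_mul_of_nonneg_left h3 hH0
      have h5' : H * (δ / 2) = δ / 2 * H := mul_comm _ _
      linarith
    · have h1 : ‖fderiv ℝ u x - fderiv ℝ u y‖ ≤ 2 * M₁ := by
        have hux := hM₁ub x hx
        have huy := hM₁ub y hy
        calc ‖fderiv ℝ u x - fderiv ℝ u y‖ ≤ ‖fderiv ℝ u x‖ + ‖fderiv ℝ u y‖ :=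
              norm_sub_le _ _
          _ ≤ 2 * M₁ := by linarith
      have htd' : t ^ α ≤ ‖x - y‖ ^ α := Real.rpow_le_rpow ht.le htd.le hα.le
      have h2 : ‖fderiv ℝ u x - fderiv ℝ u y‖ / ‖x - y‖ ^ α ≤ 2 * M₁ / t ^ α :=
        div_le_div₀ (by linarith) h1 htα htd'
      have h3 : 2 * M₁ / t ^ α = 2 / t ^ α * M₁ := by ring
      have h4 : 0 ≤ δ / 2 * H := by positivity
      linarith
  -- assemble
  have h6 : M₁ + 2 / t ^ α * M₁ = K * M₁ := by rw [hK_def]; ring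
  have h7 : K * M₁ ≤ K * (2 * M₀ / s + 2 * (s ^ α₁) * H) :=
    mul_le_mul_of_nonneg_left hM₁le hK.le
  have hKc : K * (2 * (s ^ α₁)) ≤ δ / 2 := by
    have := mul_le_mul_of_nonneg_left hsα₁ hK.le
    have hne : (4 : ℝ) * K ≠ 0 := by positivity
    calc K * (2 * s ^ α₁) = 2 * (K * s ^ α₁) := by ring
      _ ≤ 2 * (K * (δ / (4 * K))) := by linarith
      _ = δ / 2 := by field_simp; ring
  have hKc' : K * (2 * (s ^ α₁)) * H ≤ δ / 2 * H := mul_le_mul_of_nonneg_right hKc hH0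
  have hδM₀ : 0 ≤ δ * M₀ := mul_nonneg hδ.le hM₀0
  have hδM₁ : 0 ≤ δ * M₁ := mul_nonneg hδ.le hM₁0
  calc M₀ + M₁ + ‖fderiv ℝ u x - fderiv ℝ u y‖ / ‖x - y‖ ^ α
      ≤ M₀ + (M₁ + 2 / t ^ α * M₁) + δ / 2 * H := by linarith
    _ = M₀ + K * M₁ + δ / 2 * H := by rw [h6]
    _ ≤ M₀ + K * (2 * M₀ / s + 2 * (s ^ α₁) * H) + δ / 2 * H := by linarith
    _ = M₀ + 2 * K / s * M₀ + K * (2 * (s ^ α₁)) * H + δ / 2 * H := by ring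
    _ ≤ M₀ + 2 * K / s * M₀ + δ / 2 * H + δ / 2 * H := by linarith
    _ = (1 + 2 * K / s) * M₀ + δ * H := by ring
    _ ≤ (1 + 2 * K / s) * M₀ + δ * (M₀ + M₁ + H) := by linarith
end
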